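/- The matrix exponential of t(cos(u)m₂ + sin(u)m₅), where m₂ = E₃₂+E₂₃ and m₅ = i(E₃₂ - E₂₃) are the pseudo-Riemannian basis elements of su(2,1), equals the matrix F₅(t,u) with entries F₁₁ = 1, F₂₂ = cosh t, F₂₃ = e^{-iu} sinh t, F₃₂ = e^{iu} sinh t, F₃₃ = cosh t, and all other entries zero. -/

import Mathlib

/-!
The matrix `X = cos u • m₂ + sin u • m₅` has entries `e^{-iu}`, `e^{iu}` in the lower `2 × 2`
block, so `X² = diag(0, 1, 1)` and `X³ = X`. For any such element the odd powers of `X` all equal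
`X` and the even powers `X²` (apart from `X⁰ = 1`), and splitting the exponential series into even
and odd terms gives `exp(z X) = 1 + (cosh z - 1) X² + (sinh z) X`.
-/

open Matrix Complex

noncomputable section

/-- m₂ = E₃₂ + E₂₃ in su(2,1). -/
def m2 : Matrix (Fin 3) (Fin 3) ℂ := !![0, 0, 0; 0, 0, 1; 0, 1, 0]

/-- m₅ = i(E₃₂ - E₂₃) in su(2,1). -/
def m5 : Matrix (Fin 3) (Fin 3) ℂ := !![0, 0, 0; 0, 0, -I; 0, I, 0]

theorem pow_two_mul_add_one_of_pow_three_eq_self {M : Type*} [Monoid M] {x : M}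
    (hx : x ^ 3 = x) (n : ℕ) : x ^ (2 * n + 1) = x := by
  induction n with
  | zero => simp
  | succ n ih => rw [show 2 * (n + 1) + 1 = 2 * n + 1 + 2 by ring, pow_add, ih, ← pow_succ', hx]

theorem pow_two_mul_succ_of_pow_three_eq_self {M : Type*} [Monoid M] {x : M}
    (hx : x ^ 3 = x) (n : ℕ) : x ^ (2 * (n + 1)) = x ^ 2 := by
  rw [mul_add_one, pow_succ, pow_two_mul_add_one_of_pow_three_eq_self hx, sq]

theorem exp_smul_of_pow_three_eq_self {A : Type*} [Ring A] [Algebra ℂ A] [TopologicalSpace A]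
    [IsTopologicalRing A] [ContinuousSMul ℂ A] [T2Space A] {x : A} (hx : x ^ 3 = x) (z : ℂ) :
    NormedSpace.exp (z • x) = 1 + (Complex.cosh z - 1) • x ^ 2 + Complex.sinh z • x := by
  rw [NormedSpace.exp_eq_tsum ℂ]
  refine HasSum.tsum_eq (HasSum.even_add_odd ?_ ?_)
  · -- the even terms are those of `cosh z • x ^ 2`, except the `n = 0` term `1` instead of `x ^ 2`
    convert ((hasSum_cosh z).smul_const (x ^ 2)).add (hasSum_ite_eq 0 (1 - x ^ 2)) using 1
    · ext (_ | n)
      · simp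
      · rw [smul_pow, smul_smul, pow_two_mul_succ_of_pow_three_eq_self hx]
        simp [div_eq_inv_mul]
    · rw [sub_smul, one_smul]
      abel
  · convert (hasSum_sinh z).smul_const x using 2 with n
    rw [smul_pow, smul_smul, pow_two_mul_add_one_of_pow_three_eq_self hx, div_eq_inv_mul]

section LowerAntidiag

variable {R : Type*} [CommRing R]

def lowerAntidiag (a b : R) : Matrix (Fin 3) (Fin 3) R := !![0, 0, 0; 0, 0, a; 0, b, 0]

theorem lowerAntidiag_sq {a b : R} (hab : a * b = 1) :
    lowerAntidiag a b ^ 2 = !![0, 0, 0; 0, 1, 0; 0, 0, 1] := by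
  ext i j
  fin_cases i <;> fin_cases j <;> simp [lowerAntidiag, sq, hab, mul_comm b a]

theorem lowerAntidiag_pow_three {a b : R} (hab : a * b = 1) :
    lowerAntidiag a b ^ 3 = lowerAntidiag a b := by
  rw [pow_succ, lowerAntidiag_sq hab]
  ext i j
  fin_cases i <;> fin_cases j <;> simp [lowerAntidiag]

end LowerAntidiag

theorem cos_smul_m2_add_sin_smul_m5 (u : ℝ) :
    (Real.cos u : ℂ) • m2 + (Real.sin u : ℂ) • m5 =
      lowerAntidiag (Complex.exp (-I * u)) (Complex.exp (I * u)) := by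
  have h_pos : Complex.exp (I * u) = Real.cos u + Real.sin u * I := by
    rw [mul_comm, exp_mul_I, ← ofReal_cos, ← ofReal_sin]
  have h_neg : Complex.exp (-I * u) = Real.cos u - Real.sin u * I := by
    rw [neg_mul, mul_comm, ← neg_mul, exp_mul_I, cos_neg, sin_neg, ← ofReal_cos, ← ofReal_sin]
    ring
  rw [h_pos, h_neg]
  ext i j
  fin_cases i <;> fin_cases j <;> simp [m2, m5, lowerAntidiag]; ring

/-- exp(t(cos u m₂ + sin u m₅)) equals the explicit matrix F₅(t,u). -/
theorem exp_F5 (t u : ℝ) :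
    NormedSpace.exp
        ((t : ℂ) • ((Real.cos u : ℂ) • m2 + (Real.sin u : ℂ) • m5)) =
      !![1, 0, 0;
         0, (Real.cosh t : ℂ), Complex.exp (-I * u) * Real.sinh t;
         0, Complex.exp (I * u) * Real.sinh t, (Real.cosh t : ℂ)] := by
  have hu : Complex.exp (-I * u) * Complex.exp (I * u) = 1 := by
    rw [← Complex.exp_add]
    simp
  rw [cos_smul_m2_add_sin_smul_m5, exp_smul_of_pow_three_eq_self (lowerAntidiag_pow_three hu),
    lowerAntidiag_sq hu]
  ext i j
  fin_cases i <;> fin_cases j <;> simp [lowerAntidiag, mul_comm]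

end
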